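/- Let H be a finitely generated group and K a subnormal subgroup of H of index a power of a prime p (i.e., there is a chain H = G_1 ⊵ G_2 ⊵ … ⊵ G_n = K with each G_{i+1} normal in G_i). Then d_p(K) - 1 ≤ [H:K] (d_p(H) - 1). -/

import Mathlib

open scoped commutatorElement

/-- The (normal) subgroup of `G` generated by all commutators and all `p`-th powers,
i.e. `[G,G]G^p`. -/
def modP (p : ℕ) (G : Type*) [Group G] : Subgroup G :=
  Subgroup.normalClosure ({x | ∃ a b : G, x = ⁅a, b⁆} ∪ {x | ∃ g : G, x = g ^ p})

instance modP_normal (p : ℕ) (G : Type*) [Group G] : (modP p G).Normal :=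
  Subgroup.normalClosure_normal

/-- `dp p G` is the minimal number of generators of `G/([G,G]G^p)`, which for finitely
generated `G` equals `dim_{𝔽_p} H₁(G; 𝔽_p)`. -/
noncomputable def dp (p : ℕ) (G : Type*) [Group G] : ℕ :=
  sInf {n | ∃ S : Finset (G ⧸ modP p G), S.card = n ∧
    Subgroup.closure (S : Set (G ⧸ modP p G)) = ⊤}

/-- `A.SubnormalIn B`: there is a chain `B = c 0 ⊵ c 1 ⊵ ⋯ ⊵ c n = A` with each term
normal in its predecessor. -/
def Subgroup.SubnormalIn {G : Type*} [Group G] (A B : Subgroup G) : Prop :=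
  ∃ (n : ℕ) (c : ℕ → Subgroup G), c 0 = B ∧ c n = A ∧
    ∀ i < n, c (i + 1) ≤ c i ∧ ((c (i + 1)).subgroupOf (c i)).Normal

/-- `A` is a subnormal subgroup of the ambient group. -/
def Subgroup.Subnormal {G : Type*} [Group G] (A : Subgroup G) : Prop :=
  A.SubnormalIn ⊤

open Subgroup

noncomputable def ngen (G : Type*) [Group G] : ℕ :=
  sInf {n | ∃ S : Finset G, S.card = n ∧ Subgroup.closure (S : Set G) = ⊤}

lemma dp_eq_ngen (p : ℕ) (G : Type*) [Group G] : dp p G = ngen (G ⧸ modP p G) := rfl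

lemma ngen_spec (G : Type*) [Group G] [hfg : Group.FG G] :
    ∃ S : Finset G, S.card = ngen G ∧ Subgroup.closure (S : Set G) = ⊤ := by
  have h : (ngen G) ∈ {n | ∃ S : Finset G, S.card = n ∧ Subgroup.closure (S : Set G) = ⊤} := by
    apply Nat.sInf_mem
    obtain ⟨n, S, h1, h2⟩ := Group.fg_iff'.mp hfg
    exact ⟨n, S, h1, h2⟩
  exact h

lemma ngen_le {G : Type*} [Group G] {S : Finset G} (h : Subgroup.closure (S : Set G) = ⊤) :
    ngen G ≤ S.card := Nat.sInf_le ⟨S, rfl, h⟩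

lemma exists_gen_card_le_of_surjective {G H : Type*} [Group G] [Group H] (f : G →* H)
    (hf : Function.Surjective f) {S : Finset G} (hS : Subgroup.closure (S : Set G) = ⊤) :
    ∃ T : Finset H, T.card ≤ S.card ∧ Subgroup.closure (T : Set H) = ⊤ := by
  classical
  refine ⟨S.image f, Finset.card_image_le, ?_⟩
  rw [Finset.coe_image, ← MonoidHom.map_closure, hS, Subgroup.map_top_of_surjective f hf]

lemma ngen_le_of_surjective {G H : Type*} [Group G] [Group H] (f : G →* H)
    (hf : Function.Surjective f) (hfg : Group.FG G) : ngen H ≤ ngen G := by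
  haveI := hfg
  obtain ⟨S, hcard, hS⟩ := ngen_spec G
  obtain ⟨T, hT, hTgen⟩ := exists_gen_card_le_of_surjective f hf hS
  exact le_trans (ngen_le hTgen) (hcard ▸ hT)

lemma ngen_eq_of_mulEquiv {G H : Type*} [Group G] [Group H] (e : G ≃* H) : ngen G = ngen H := by
  classical
  unfold ngen
  congr 1
  ext n
  constructor
  · rintro ⟨S, rfl, hS⟩
    refine ⟨S.image e, Finset.card_image_of_injective _ e.injective, ?_⟩
    rw [Finset.coe_image, show ⇑e = ⇑e.toMonoidHom from rfl, ← MonoidHom.map_closure, hS,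
        Subgroup.map_top_of_surjective _ e.surjective]
  · rintro ⟨S, rfl, hS⟩
    refine ⟨S.image e.symm, Finset.card_image_of_injective _ e.symm.injective, ?_⟩
    rw [Finset.coe_image, show ⇑e.symm = ⇑e.symm.toMonoidHom from rfl, ← MonoidHom.map_closure,
        hS, Subgroup.map_top_of_surjective _ e.symm.surjective]

lemma commutator_mem_modP {G : Type*} [Group G] (p : ℕ) (a b : G) : ⁅a, b⁆ ∈ modP p G :=
  Subgroup.subset_normalClosure (Or.inl ⟨a, b, rfl⟩)

lemma pow_mem_modP {G : Type*} [Group G] (p : ℕ) (g : G) : g ^ p ∈ modP p G :=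
  Subgroup.subset_normalClosure (Or.inr ⟨g, rfl⟩)

lemma modP_le {G : Type*} [Group G] {p : ℕ} {M : Subgroup G} (hM : M.Normal)
    (hc : ∀ a b : G, ⁅a, b⁆ ∈ M) (hp : ∀ g : G, g ^ p ∈ M) : modP p G ≤ M := by
  apply Subgroup.normalClosure_le_normal
  rintro x (⟨a, b, rfl⟩ | ⟨g, rfl⟩)
  exacts [hc a b, hp g]

lemma modP_map {G H : Type*} [Group G] [Group H] (p : ℕ) (f : G →* H)
    (hf : Function.Surjective f) : (modP p G).map f = modP p H := by
  unfold modP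
  rw [Subgroup.map_normalClosure _ f hf]
  congr 1
  rw [Set.image_union]
  congr 1
  · ext x
    constructor
    · rintro ⟨y, ⟨a, b, rfl⟩, rfl⟩
      exact ⟨f a, f b, map_commutatorElement f a b⟩
    · rintro ⟨a, b, rfl⟩
      obtain ⟨a', rfl⟩ := hf a
      obtain ⟨b', rfl⟩ := hf b
      exact ⟨⁅a', b'⁆, ⟨a', b', rfl⟩, map_commutatorElement f a' b'⟩
  · ext x
    constructor
    · rintro ⟨y, ⟨g, rfl⟩, rfl⟩
      exact ⟨f g, map_pow f g p⟩
    · rintro ⟨g, rfl⟩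
      obtain ⟨g', rfl⟩ := hf g
      exact ⟨g' ^ p, ⟨g', rfl⟩, map_pow f g' p⟩

lemma dp_le_of_surjective {G H : Type*} [Group G] [Group H] (p : ℕ) (f : G →* H)
    (hf : Function.Surjective f) (hfg : Group.FG G) : dp p H ≤ dp p G := by
  haveI := hfg
  rw [dp_eq_ngen, dp_eq_ngen]
  have hle : modP p G ≤ Subgroup.comap f (modP p H) := by
    intro x hx
    rw [Subgroup.mem_comap, ← modP_map p f hf]
    exact Subgroup.mem_map_of_mem f hx
  refine ngen_le_of_surjective (QuotientGroup.map _ _ f hle) ?_ inferInstance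
  intro x
  obtain ⟨h, rfl⟩ := QuotientGroup.mk_surjective x
  obtain ⟨g, rfl⟩ := hf h
  exact ⟨QuotientGroup.mk g, rfl⟩

lemma dp_eq_of_surjective_ker_le {G H : Type*} [Group G] [Group H] (p : ℕ) (f : G →* H)
    (hf : Function.Surjective f) (hker : f.ker ≤ modP p G) : dp p G = dp p H := by
  have h1 : Subgroup.comap f (modP p H) = modP p G := by
    rw [← modP_map p f hf, Subgroup.comap_map_eq, sup_of_le_left hker]
  set g := (QuotientGroup.mk' (modP p H)).comp f with hg_def
  have hg : Function.Surjective g := (QuotientGroup.mk'_surjective _).comp hf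
  have hkg : modP p G = g.ker := by
    rw [hg_def, ← MonoidHom.comap_ker, QuotientGroup.ker_mk', h1]
  rw [dp_eq_ngen, dp_eq_ngen]
  haveI : (g.ker).Normal := inferInstance
  exact ngen_eq_of_mulEquiv ((QuotientGroup.quotientMulEquivOfEq hkg).trans
    (QuotientGroup.quotientKerEquivOfSurjective g hg))

lemma dp_congr {G H : Type*} [Group G] [Group H] (p : ℕ) (e : G ≃* H) : dp p G = dp p H :=
  dp_eq_of_surjective_ker_le p e.toMonoidHom e.surjective
    (le_trans (le_of_eq ((MonoidHom.ker_eq_bot_iff _).mpr e.injective)) bot_le)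

lemma finite_of_fg_exponent_p {p : ℕ} {A : Type*} [CommGroup A] (hp : 0 < p) (hfg : Group.FG A)
    (hexp : ∀ x : A, x ^ p = 1) : Finite A := by
  classical
  obtain ⟨_, S, _, hS⟩ := Group.fg_iff'.mp hfg
  have key : ∀ a : A, ∃ f : A → ℕ, a = ∏ s ∈ S, s ^ f s := by
    intro a
    have ha : a ∈ Subgroup.closure (S : Set A) := hS ▸ Subgroup.mem_top a
    induction ha using Subgroup.closure_induction with
    | mem x hx =>
      refine ⟨fun s => if s = x then 1 else 0, ?_⟩
      show x = ∏ s ∈ S, s ^ (if s = x then 1 else 0)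
      rw [Finset.prod_eq_single_of_mem x hx fun b _ hb => by
        show b ^ (if b = x then 1 else 0) = 1
        rw [if_neg hb, pow_zero]]
      show x = x ^ (if x = x then 1 else 0)
      rw [if_pos rfl, pow_one]
    | one =>
      refine ⟨fun _ => 0, ?_⟩
      show (1 : A) = ∏ s ∈ S, s ^ (0 : ℕ)
      rw [Finset.prod_congr rfl fun s _ => pow_zero s, Finset.prod_const_one]
    | mul x y hx hy ihx ihy =>
      obtain ⟨f, rfl⟩ := ihx
      obtain ⟨g, rfl⟩ := ihy
      refine ⟨f + g, ?_⟩
      show (∏ s ∈ S, s ^ f s) * ∏ s ∈ S, s ^ g s = ∏ s ∈ S, s ^ (f s + g s)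
      rw [← Finset.prod_mul_distrib]
      exact Finset.prod_congr rfl fun s _ => (pow_add s (f s) (g s)).symm
    | inv x hx ihx =>
      obtain ⟨f, rfl⟩ := ihx
      refine ⟨fun s => f s * (p - 1), ?_⟩
      show (∏ s ∈ S, s ^ f s)⁻¹ = ∏ s ∈ S, s ^ (f s * (p - 1))
      refine inv_eq_of_mul_eq_one_right ?_
      rw [← Finset.prod_mul_distrib]
      have h2 : ∀ s ∈ S, s ^ f s * s ^ (f s * (p - 1)) = 1 := by
        intro s _
        rw [← pow_add]
        have h1 : f s + f s * (p - 1) = f s * p := by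
          cases p with
          | zero => omega
          | succ q => rw [Nat.succ_sub_one]; ring
        rw [h1, mul_comm, pow_mul, hexp, one_pow]
      rw [Finset.prod_congr rfl h2, Finset.prod_const_one]
  have hsurj : Function.Surjective
      (fun (f : {x // x ∈ S} → Fin p) => ∏ s ∈ S.attach, (s : A) ^ (f s).val) := by
    intro a
    obtain ⟨f, rfl⟩ := key a
    refine ⟨fun s => ⟨f (s : A) % p, Nat.mod_lt _ hp⟩, ?_⟩
    show ∏ s ∈ S.attach, (s : A) ^ (f (s : A) % p) = ∏ s ∈ S, s ^ f s
    calc ∏ s ∈ S.attach, (s : A) ^ (f (s : A) % p)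
        = ∏ s ∈ S.attach, (s : A) ^ (f (s : A)) :=
          Finset.prod_congr rfl fun s _ => (pow_eq_pow_mod (f (s : A)) (hexp (s : A))).symm
      _ = ∏ s ∈ S, s ^ f s := Finset.prod_attach S (fun s => s ^ f s)
  exact Finite.of_surjective _ hsurj

lemma coatom_facts {p : ℕ} {Q : Type*} [Group Q] [Finite Q] (hp : p.Prime) (hQ : IsPGroup p Q)
    {M : Subgroup Q} (hM : IsCoatom M) :
    M.Normal ∧ M.index = p ∧ (∀ a b : Q, ⁅a, b⁆ ∈ M) ∧ (∀ g : Q, g ^ p ∈ M) := by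
  haveI : Fact p.Prime := ⟨hp⟩
  haveI hnil : Group.IsNilpotent Q := hQ.isNilpotent
  have hnormal : M.Normal :=
    Subgroup.NormalizerCondition.normal_of_coatom M normalizerCondition_of_isNilpotent hM
  haveI := hnormal
  set π := QuotientGroup.mk' M with hπ
  have hsub : ∀ W : Subgroup (Q ⧸ M), W = ⊥ ∨ W = ⊤ := by
    intro W
    have h1 : M ≤ Subgroup.comap π W := by
      intro x hx
      have hx1 : π x = 1 := (QuotientGroup.eq_one_iff x).mpr hx
      rw [Subgroup.mem_comap, hx1]
      exact one_mem W
    have hmc : Subgroup.map π (Subgroup.comap π W) = W :=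
      Subgroup.map_comap_eq_self_of_surjective (QuotientGroup.mk'_surjective M) W
    rcases eq_or_lt_of_le h1 with h | h
    · left
      rw [← hmc, ← h]
      refine le_bot_iff.mp ?_
      rintro x ⟨m, hm, rfl⟩
      exact Subgroup.mem_bot.mpr ((QuotientGroup.eq_one_iff m).mpr hm)
    · right
      rw [← hmc, hM.2 _ h]
      exact Subgroup.map_top_of_surjective _ (QuotientGroup.mk'_surjective M)
  obtain ⟨x, hx⟩ : ∃ x : Q, x ∉ M := by
    by_contra hcon
    push_neg at hcon
    exact hM.1 (Subgroup.eq_top_iff' M |>.mpr hcon)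
  set t : Q ⧸ M := π x with ht_def
  have ht : t ≠ 1 := fun h => hx ((QuotientGroup.eq_one_iff x).mp h)
  have hz : Subgroup.zpowers t = ⊤ := by
    rcases hsub (Subgroup.zpowers t) with h | h
    · exact absurd (Subgroup.zpowers_eq_bot.mp h) ht
    · exact h
  have htp : t ^ p = 1 := by
    rcases hsub (Subgroup.zpowers (t ^ p)) with h | h
    · exact Subgroup.zpowers_eq_bot.mp h
    · exfalso
      have htm : t ∈ Subgroup.zpowers (t ^ p) := h ▸ Subgroup.mem_top t
      obtain ⟨k, hk⟩ := htm
      have hk' : (t ^ p) ^ k = t := hk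
      have h1 : t ^ ((p : ℤ) * k - 1) = 1 := by
        rw [zpow_sub, zpow_mul, zpow_natCast, hk', zpow_one]
        simp
      have h2 : (orderOf t : ℤ) ∣ (p : ℤ) * k - 1 := orderOf_dvd_iff_zpow_eq_one.mpr h1
      obtain ⟨m, hm⟩ := (IsPGroup.iff_orderOf.mp (hQ.to_quotient M)) t
      have hm1 : m ≠ 0 := by
        rintro rfl
        rw [pow_zero, orderOf_eq_one_iff] at hm
        exact ht hm
      have hpd : (p : ℤ) ∣ (p : ℤ) * k - 1 := by
        refine dvd_trans ?_ h2
        rw [hm]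
        exact_mod_cast dvd_pow_self p hm1
      have hp1 : (p : ℤ) ∣ 1 := (dvd_sub_right (Dvd.intro k rfl)).mp hpd
      have hple := Int.le_of_dvd one_pos hp1
      have := hp.two_le
      omega
  have hord : orderOf t = p := by
    have h1 : orderOf t ∣ p := orderOf_dvd_of_pow_eq_one htp
    rcases (Nat.Prime.eq_one_or_self_of_dvd hp _ h1) with h | h
    · exact absurd (orderOf_eq_one_iff.mp h) ht
    · exact h
  have hmem : ∀ y : Q ⧸ M, y ∈ Subgroup.zpowers t := fun y => hz ▸ Subgroup.mem_top y
  refine ⟨hnormal, ?_, ?_, ?_⟩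
  · show Nat.card (Q ⧸ M) = p
    rw [← hord, ← Nat.card_zpowers t, hz, Subgroup.card_top]
  · intro a b
    rw [← QuotientGroup.eq_one_iff]
    show π ⁅a, b⁆ = 1
    rw [map_commutatorElement π a b]
    obtain ⟨i, hi⟩ := hmem (π a)
    obtain ⟨j, hj⟩ := hmem (π b)
    have hi' : t ^ i = π a := hi
    have hj' : t ^ j = π b := hj
    rw [← hi', ← hj']
    exact commutatorElement_eq_one_iff_commute.mpr ((Commute.refl t).zpow_zpow i j)
  · intro g
    rw [← QuotientGroup.eq_one_iff]
    show π (g ^ p) = 1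
    rw [map_pow]
    obtain ⟨i, hi⟩ := hmem (π g)
    have hi' : t ^ i = π g := hi
    rw [← hi', ← zpow_natCast, ← zpow_mul, mul_comm, zpow_mul, zpow_natCast, htp, one_zpow]

lemma ngen_le_dp_of_pgroup {p : ℕ} {Q : Type*} [Group Q] [Finite Q] (hp : p.Prime)
    (hQ : IsPGroup p Q) : ngen Q ≤ dp p Q := by
  letI : DecidableEq Q := Classical.decEq _
  letI : DecidableEq (Q ⧸ modP p Q) := Classical.decEq _
  haveI : Finite (Subgroup Q) := Finite.of_injective (fun H => (H : Set Q)) SetLike.coe_injective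
  obtain ⟨Sb, hcard, hgen⟩ := ngen_spec (Q ⧸ modP p Q)
  set S : Finset Q := Sb.image Quotient.out with hS_def
  have himg : S.image (QuotientGroup.mk : Q → Q ⧸ modP p Q) = Sb := by
    rw [hS_def, Finset.image_image]
    refine Finset.image_congr ?_ |>.trans Finset.image_id
    intro q _
    exact QuotientGroup.out_eq' q
  have hkey : Subgroup.closure (S : Set Q) ⊔ modP p Q = ⊤ := by
    have h1 : Subgroup.map (QuotientGroup.mk' (modP p Q)) (Subgroup.closure (S : Set Q)) = ⊤ := by
      rw [MonoidHom.map_closure]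
      have : (QuotientGroup.mk' (modP p Q)) '' (S : Set Q) = (Sb : Set (Q ⧸ modP p Q)) := by
        rw [show ⇑(QuotientGroup.mk' (modP p Q)) = (QuotientGroup.mk : Q → Q ⧸ modP p Q) from rfl,
          ← Finset.coe_image, himg]
      rw [this, hgen]
    have h2 := congrArg (Subgroup.comap (QuotientGroup.mk' (modP p Q))) h1
    rw [Subgroup.comap_map_eq, QuotientGroup.ker_mk'] at h2
    rw [h2]
    exact Subgroup.comap_top _
  have hclos : Subgroup.closure (S : Set Q) = ⊤ := by
    by_contra hne
    obtain ⟨M, hM, hPM⟩ := (IsCoatomic.eq_top_or_exists_le_coatom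
      (Subgroup.closure (S : Set Q))).resolve_left hne
    obtain ⟨hMnormal, _, hMc, hMp⟩ := coatom_facts hp hQ hM
    have hmodP : modP p Q ≤ M := modP_le hMnormal hMc hMp
    have : (⊤ : Subgroup Q) ≤ M := hkey ▸ sup_le hPM hmodP
    exact hM.1 (top_le_iff.mp this)
  calc ngen Q ≤ S.card := ngen_le hclos
    _ ≤ Sb.card := Finset.card_image_le
    _ = dp p Q := hcard

lemma exists_normal_index_p {p : ℕ} {G : Type*} [Group G] (hp : p.Prime) {N₀ : Subgroup G}
    (hN₀ : N₀.Normal) {j : ℕ} (hj : 1 ≤ j) (hidx : N₀.index = p ^ j) :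
    ∃ N : Subgroup G, N.Normal ∧ N₀ ≤ N ∧ N.index = p := by
  haveI := hN₀
  haveI : Finite (G ⧸ N₀) := by
    refine Nat.finite_of_card_ne_zero ?_
    show N₀.index ≠ 0
    rw [hidx]
    exact pow_ne_zero _ hp.pos.ne'
  have hpg : IsPGroup p (G ⧸ N₀) := IsPGroup.of_card hidx
  have hnt : (⊥ : Subgroup (G ⧸ N₀)) ≠ ⊤ := by
    have h1 : 1 < Nat.card (G ⧸ N₀) := by
      show 1 < N₀.index
      rw [hidx]
      exact Nat.one_lt_pow (by omega) hp.one_lt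
    haveI : Nontrivial (G ⧸ N₀) := Finite.one_lt_card_iff_nontrivial.mp h1
    exact bot_ne_top
  obtain ⟨M, hM, _⟩ := (IsCoatomic.eq_top_or_exists_le_coatom
    (⊥ : Subgroup (G ⧸ N₀))).resolve_left hnt
  obtain ⟨hMnormal, hMidx, _, _⟩ := coatom_facts hp hpg hM
  refine ⟨Subgroup.comap (QuotientGroup.mk' N₀) M, Subgroup.Normal.comap hMnormal _, ?_, ?_⟩
  · intro x hx
    have h1 : (QuotientGroup.mk' N₀) x = 1 := (QuotientGroup.eq_one_iff x).mpr hx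
    rw [Subgroup.mem_comap, h1]
    exact one_mem M
  · rw [Subgroup.index_comap_of_surjective _ (QuotientGroup.mk'_surjective N₀), hMidx]

lemma schreier_index_p {p : ℕ} {Q : Type*} [Group Q] (hp : p.Prime) {N : Subgroup Q}
    (hN : N.Normal) (hidx : N.index = p) {S : Finset Q}
    (hS : Subgroup.closure (S : Set Q) = ⊤) :
    ∃ T : Finset Q, (T : Set Q) ⊆ N ∧ T.card ≤ 1 + p * (S.card - 1) ∧
      Subgroup.closure (T : Set Q) = N := by
  classical
  haveI := hN
  have hp0 : 0 < p := hp.pos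
  obtain ⟨x, hxS, hxN⟩ : ∃ x ∈ S, x ∉ N := by
    by_contra h
    push_neg at h
    have h1 : (⊤ : Subgroup Q) ≤ N := hS ▸ ((Subgroup.closure_le N).mpr fun s hs => h s hs)
    have h2 : N.index = 1 := Subgroup.index_eq_one.mpr (top_le_iff.mp h1)
    rw [hidx] at h2
    exact hp.one_lt.ne' h2
  set π := QuotientGroup.mk' N with hπ_def
  haveI : Finite (Q ⧸ N) := by
    refine Nat.finite_of_card_ne_zero ?_
    show N.index ≠ 0
    rw [hidx]; exact hp0.ne'
  have hcard : Nat.card (Q ⧸ N) = p := hidx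
  have hπx : π x ≠ 1 := fun h => hxN ((QuotientGroup.eq_one_iff x).mp h)
  have hordx : orderOf (π x) = p := by
    have h1 : orderOf (π x) ∣ p := hcard ▸ orderOf_dvd_natCard (π x)
    rcases hp.eq_one_or_self_of_dvd _ h1 with h | h
    · exact absurd (orderOf_eq_one_iff.mp h) hπx
    · exact h
  have hexp : ∀ s : Q, ∃ cc : ℕ, (x ^ cc)⁻¹ * s ∈ N := by
    intro s
    have hzp : Subgroup.zpowers (π x) = ⊤ := by
      apply Subgroup.eq_top_of_card_eq
      rw [Nat.card_zpowers, hordx, hcard]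
    have h1 : π s ∈ Subgroup.zpowers (π x) := hzp ▸ Subgroup.mem_top _
    obtain ⟨k, hk⟩ := h1
    have hk' : π x ^ k = π s := hk
    refine ⟨(k % (p : ℤ)).toNat, ?_⟩
    rw [← QuotientGroup.eq_one_iff]
    show π ((x ^ (k % (p : ℤ)).toNat)⁻¹ * s) = 1
    rw [map_mul, map_inv, map_pow]
    have h2 : π x ^ (k % (p : ℤ)).toNat = π s := by
      have h3 : ((k % (p : ℤ)).toNat : ℤ) = k % (p : ℤ) :=
        Int.toNat_of_nonneg (Int.emod_nonneg k (by exact_mod_cast hp0.ne'))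
      rw [← zpow_natCast, h3, ← hordx, zpow_mod_orderOf, hk']
    rw [h2, inv_mul_cancel]
  choose cf hcf using hexp
  set y : Q → Q := fun s => (x ^ cf s)⁻¹ * s with hy_def
  have hyN : ∀ s, y s ∈ N := fun s => hcf s
  set T : Finset Q := insert (x ^ p)
    (((S.erase x) ×ˢ Finset.range p).image fun pr => x ^ pr.2 * y pr.1 * (x ^ pr.2)⁻¹) with hT_def
  have hxpT : x ^ p ∈ T := Finset.mem_insert_self _ _
  have hconjT : ∀ s ∈ S.erase x, ∀ r ∈ Finset.range p, x ^ r * y s * (x ^ r)⁻¹ ∈ T := by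
    intro s hs r hr
    refine Finset.mem_insert_of_mem (Finset.mem_image.mpr ⟨(s, r), ?_, rfl⟩)
    exact Finset.mem_product.mpr ⟨hs, hr⟩
  have hyT : ∀ s ∈ S.erase x, y s ∈ T := by
    intro s hs
    have := hconjT s hs 0 (Finset.mem_range.mpr hp0)
    simpa using this
  have hcardT : T.card ≤ 1 + p * (S.card - 1) := by
    refine (Finset.card_insert_le _ _).trans ?_
    have h1 := Finset.card_image_le (s := (S.erase x) ×ˢ Finset.range p)
      (f := fun pr => x ^ pr.2 * y pr.1 * (x ^ pr.2)⁻¹)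
    rw [Finset.card_product, Finset.card_range, Finset.card_erase_of_mem hxS] at h1
    calc (Finset.image (fun pr => x ^ pr.2 * y pr.1 * (x ^ pr.2)⁻¹)
          (S.erase x ×ˢ Finset.range p)).card + 1 ≤ 1 + (S.card - 1) * p := by omega
      _ = 1 + p * (S.card - 1) := by rw [Nat.mul_comm]
  have hxpN : x ^ p ∈ N := by
    have := Subgroup.pow_index_mem N x
    rwa [hidx] at this
  have hTN : (T : Set Q) ⊆ N := by
    intro t ht
    rw [Finset.coe_insert, Set.mem_insert_iff] at ht
    rcases ht with rfl | ht
    · exact hxpN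
    · rw [Finset.coe_image] at ht
      obtain ⟨⟨s, r⟩, _, rfl⟩ := ht
      exact hN.conj_mem _ (hyN s) _
  set W := Subgroup.closure (T : Set Q) with hW_def
  have hWN : W ≤ N := (Subgroup.closure_le N).mpr hTN
  have hxpW : x ^ p ∈ W := Subgroup.subset_closure hxpT
  have hgen : Subgroup.closure (insert x (T : Set Q)) = ⊤ := by
    rw [eq_top_iff, ← hS]
    refine (Subgroup.closure_le _).mpr ?_
    intro s hs
    by_cases hsx : s = x
    · subst hsx
      exact Subgroup.subset_closure (Set.mem_insert s _)
    · have h1 : x ∈ Subgroup.closure (insert x (T : Set Q)) :=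
        Subgroup.subset_closure (Set.mem_insert x _)
      have h2 : y s ∈ Subgroup.closure (insert x (T : Set Q)) :=
        Subgroup.subset_closure (Set.mem_insert_of_mem x
          (hyT s (Finset.mem_erase.mpr ⟨hsx, hs⟩)))
      have h3 : s = x ^ cf s * y s := by
        rw [hy_def]
        simp [mul_inv_cancel_left]
      rw [h3]
      exact mul_mem (pow_mem h1 _) h2
  have hfwd : ∀ t ∈ T, x * t * x⁻¹ ∈ W := by
    intro t ht
    rw [hT_def, Finset.mem_insert] at ht
    rcases ht with rfl | ht
    · have : x * x ^ p * x⁻¹ = x ^ p := by group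
      rw [this]; exact hxpW
    · obtain ⟨⟨s, r⟩, hmem, rfl⟩ := Finset.mem_image.mp ht
      obtain ⟨hs, hr⟩ := Finset.mem_product.mp hmem
      rw [Finset.mem_range] at hr
      have heq : x * (x ^ r * y s * (x ^ r)⁻¹) * x⁻¹ = x ^ (r + 1) * y s * (x ^ (r + 1))⁻¹ := by
        rw [pow_succ']
        group
      rw [heq]
      by_cases hrp : r + 1 < p
      · exact Subgroup.subset_closure (hconjT s hs (r + 1) (Finset.mem_range.mpr hrp))
      · have hr1 : r + 1 = p := by omega
        rw [hr1]
        have hy0 : y s ∈ W := Subgroup.subset_closure (hyT s hs)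
        have : x ^ p * y s * (x ^ p)⁻¹ ∈ W := mul_mem (mul_mem hxpW hy0) (inv_mem hxpW)
        exact this
  have hbwd : ∀ t ∈ T, x⁻¹ * t * x ∈ W := by
    intro t ht
    rw [hT_def, Finset.mem_insert] at ht
    rcases ht with rfl | ht
    · have : x⁻¹ * x ^ p * x = x ^ p := by group
      rw [this]; exact hxpW
    · obtain ⟨⟨s, r⟩, hmem, rfl⟩ := Finset.mem_image.mp ht
      obtain ⟨hs, hr⟩ := Finset.mem_product.mp hmem
      rw [Finset.mem_range] at hr
      cases r with
      | succ r' =>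
        have heq : x⁻¹ * (x ^ (r' + 1) * y s * (x ^ (r' + 1))⁻¹) * x
            = x ^ r' * y s * (x ^ r')⁻¹ := by
          rw [pow_succ']
          group
        rw [heq]
        exact Subgroup.subset_closure (hconjT s hs r' (Finset.mem_range.mpr (by omega)))
      | zero =>
        obtain ⟨q, rfl⟩ : ∃ q, p = q + 1 := ⟨p - 1, by omega⟩
        have heq : x⁻¹ * (x ^ 0 * y s * (x ^ 0)⁻¹) * x
            = (x ^ (q + 1))⁻¹ * (x ^ q * y s * (x ^ q)⁻¹) * x ^ (q + 1) := by
          rw [pow_succ]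
          group
        rw [heq]
        have h1 : x ^ q * y s * (x ^ q)⁻¹ ∈ W :=
          Subgroup.subset_closure (hconjT s hs q (Finset.mem_range.mpr (by omega)))
        exact mul_mem (mul_mem (inv_mem hxpW) h1) hxpW
  have hWfwd : ∀ g ∈ W, x * g * x⁻¹ ∈ W := by
    intro g hg
    induction hg using Subgroup.closure_induction with
    | mem t ht => exact hfwd t ht
    | one => simpa using one_mem W
    | mul a b ha hb iha ihb =>
      have heq : x * (a * b) * x⁻¹ = (x * a * x⁻¹) * (x * b * x⁻¹) := by group
      rw [heq]; exact mul_mem iha ihb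
    | inv a ha iha =>
      have heq : x * a⁻¹ * x⁻¹ = (x * a * x⁻¹)⁻¹ := by group
      rw [heq]; exact inv_mem iha
  have hWbwd : ∀ g ∈ W, x⁻¹ * g * x ∈ W := by
    intro g hg
    induction hg using Subgroup.closure_induction with
    | mem t ht => exact hbwd t ht
    | one => simpa using one_mem W
    | mul a b ha hb iha ihb =>
      have heq : x⁻¹ * (a * b) * x = (x⁻¹ * a * x) * (x⁻¹ * b * x) := by group
      rw [heq]; exact mul_mem iha ihb
    | inv a ha iha =>
      have heq : x⁻¹ * a⁻¹ * x = (x⁻¹ * a * x)⁻¹ := by group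
      rw [heq]; exact inv_mem iha
  have hxn : x ∈ Subgroup.normalizer (W : Set Q) := by
    rw [Subgroup.mem_normalizer_iff]
    intro h
    constructor
    · exact hWfwd h
    · intro hh
      have := hWbwd _ hh
      have heq : x⁻¹ * (x * h * x⁻¹) * x = h := by group
      rwa [heq] at this
  have hWnormal : W.Normal := by
    rw [← Subgroup.normalizer_eq_top_iff]
    rw [eq_top_iff, ← hgen]
    refine (Subgroup.closure_le _).mpr ?_
    rintro g hg
    rcases Set.mem_insert_iff.mp hg with rfl | hg'
    · exact hxn
    · exact Subgroup.le_normalizer (Subgroup.subset_closure hg')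
  haveI := hWnormal
  have hxpW1 : QuotientGroup.mk' W x ^ p = 1 := by
    rw [← map_pow]
    exact (QuotientGroup.eq_one_iff _).mpr hxpW
  have hgenW : Subgroup.zpowers (QuotientGroup.mk' W x) = ⊤ := by
    have hcom : Subgroup.comap (QuotientGroup.mk' W)
        (Subgroup.zpowers (QuotientGroup.mk' W x)) = ⊤ := by
      rw [eq_top_iff, ← hgen]
      refine (Subgroup.closure_le _).mpr ?_
      rintro g hg
      rcases Set.mem_insert_iff.mp hg with rfl | hg'
      · exact Subgroup.mem_comap.mpr (Subgroup.mem_zpowers _)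
      · refine Subgroup.mem_comap.mpr ?_
        have : QuotientGroup.mk' W g = 1 :=
          (QuotientGroup.eq_one_iff _).mpr (Subgroup.subset_closure hg')
        rw [this]
        exact one_mem _
    rw [eq_top_iff]
    intro q _
    obtain ⟨g, rfl⟩ := QuotientGroup.mk'_surjective W q
    exact Subgroup.mem_comap.mp (hcom ▸ Subgroup.mem_top g)
  have hWidx_dvd : W.index ∣ p := by
    show Nat.card (Q ⧸ W) ∣ p
    have h1 : Nat.card (Q ⧸ W) = orderOf (QuotientGroup.mk' W x) := by
      rw [← Nat.card_zpowers, hgenW, Subgroup.card_top]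
    rw [h1]
    exact orderOf_dvd_of_pow_eq_one hxpW1
  have hrel := Subgroup.relIndex_mul_index hWN
  rw [hidx] at hrel
  have hdvd : W.relIndex N * p ∣ p := hrel ▸ hWidx_dvd
  have hrel1 : W.relIndex N = 1 := by
    obtain ⟨d, hd⟩ := hdvd
    have h4 : p * (W.relIndex N * d) = p * 1 := by
      calc p * (W.relIndex N * d) = W.relIndex N * p * d := by ring
        _ = p := hd.symm
        _ = p * 1 := (mul_one p).symm
    have h5 := Nat.eq_of_mul_eq_mul_left hp0 h4
    exact Nat.dvd_one.mp ⟨d, h5.symm⟩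
  have hNW : N ≤ W := Subgroup.relIndex_eq_one.mp hrel1
  exact ⟨T, hTN, hcardT, le_antisymm hWN hNW⟩

lemma exists_finset_subtype {G : Type*} [Group G] {N : Subgroup G} (T : Finset G)
    (hsub : (T : Set G) ⊆ N) (hclos : Subgroup.closure (T : Set G) = N) :
    ∃ T' : Finset ↥N, T'.card = T.card ∧ Subgroup.closure (T' : Set ↥N) = ⊤ := by
  classical
  refine ⟨T.attach.map ⟨fun t => (⟨t.1, hsub t.2⟩ : ↥N),
    fun a b h => Subtype.ext (by simpa using congrArg Subtype.val h)⟩, ?_, ?_⟩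
  · rw [Finset.card_map, Finset.card_attach]
  · apply Subgroup.map_injective N.subtype_injective
    rw [MonoidHom.map_closure]
    have himg : N.subtype '' ((T.attach.map ⟨fun t => (⟨t.1, hsub t.2⟩ : ↥N),
        fun a b h => Subtype.ext (by simpa using congrArg Subtype.val h)⟩ : Finset ↥N) : Set ↥N)
        = (T : Set G) := by
      ext g
      constructor
      · rintro ⟨u, hu, rfl⟩
        rw [Finset.mem_coe, Finset.mem_map] at hu
        obtain ⟨t, _, rfl⟩ := hu
        exact t.2
      · intro hg
        exact ⟨⟨g, hsub hg⟩, by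
          rw [Finset.mem_coe, Finset.mem_map]
          exact ⟨⟨g, hg⟩, Finset.mem_attach _ _, rfl⟩, rfl⟩
    rw [himg, hclos, ← MonoidHom.range_eq_map, Subgroup.range_subtype]

lemma dp_step {p : ℕ} {G : Type*} [Group G] (hp : p.Prime) (hfg : Group.FG G)
    {N : Subgroup G} (hN : N.Normal) (hidx : N.index = p) :
    (dp p ↥N : ℤ) - 1 ≤ (p : ℤ) * ((dp p G : ℤ) - 1) := by
  classical
  haveI := hN
  haveI := hfg
  have hp0 : 0 < p := hp.pos
  haveI : N.FiniteIndex := ⟨by rw [hidx]; exact hp0.ne'⟩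
  haveI hfgN : Group.FG ↥N := inferInstance
  set s' : Set G := {g | (∃ a ∈ N, ∃ b ∈ N, g = ⁅a, b⁆) ∨ (∃ a ∈ N, g = a ^ p)} with hs'_def
  set M := Subgroup.closure s' with hM_def
  have hs'N : s' ⊆ N := by
    rintro g (⟨a, ha, b, hb, rfl⟩ | ⟨a, ha, rfl⟩)
    · rw [commutatorElement_def]
      exact mul_mem (mul_mem (mul_mem ha hb) (inv_mem ha)) (inv_mem hb)
    · exact pow_mem ha p
  have hMN : M ≤ N := (Subgroup.closure_le N).mpr hs'N
  have hMnormal : M.Normal := by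
    constructor
    intro m hm g
    induction hm using Subgroup.closure_induction with
    | mem t ht =>
      refine Subgroup.subset_closure ?_
      rcases ht with ⟨a, ha, b, hb, rfl⟩ | ⟨a, ha, rfl⟩
      · left
        refine ⟨g * a * g⁻¹, hN.conj_mem a ha g, g * b * g⁻¹, hN.conj_mem b hb g, ?_⟩
        rw [commutatorElement_def, commutatorElement_def]
        group
      · right
        refine ⟨g * a * g⁻¹, hN.conj_mem a ha g, ?_⟩
        rw [conj_pow]
    | one => simpa using one_mem M
    | mul a b ha hb iha ihb =>
      have heq : g * (a * b) * g⁻¹ = (g * a * g⁻¹) * (g * b * g⁻¹) := by group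
      rw [heq]; exact mul_mem iha ihb
    | inv a ha iha =>
      have heq : g * a⁻¹ * g⁻¹ = (g * a * g⁻¹)⁻¹ := by group
      rw [heq]; exact inv_mem iha
  haveI := hMnormal
  set κ := QuotientGroup.mk' M with hκ_def
  set Nb : Subgroup (G ⧸ M) := N.map κ with hNb_def
  have hNbnormal : Nb.Normal := hN.map κ (QuotientGroup.mk'_surjective M)
  set f : ↥N →* ↥Nb := κ.subgroupMap N with hf_def
  have hfsurj : Function.Surjective f := κ.subgroupMap_surjective N
  -- kernel of f is M.subgroupOf N, which equals modP p ↥N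
  have hMsub : M.subgroupOf N = modP p ↥N := by
    apply le_antisymm
    · intro x hx
      rw [Subgroup.mem_subgroupOf] at hx
      have hsub2 : s' ⊆ (Subgroup.map N.subtype (modP p ↥N) : Set G) := by
        rintro g (⟨a, ha, b, hb, rfl⟩ | ⟨a, ha, rfl⟩)
        · exact ⟨⁅(⟨a, ha⟩ : ↥N), (⟨b, hb⟩ : ↥N)⁆, commutator_mem_modP p _ _, rfl⟩
        · exact ⟨(⟨a, ha⟩ : ↥N) ^ p, pow_mem_modP p _, rfl⟩
      have h2 : M ≤ Subgroup.map N.subtype (modP p ↥N) :=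
        (Subgroup.closure_le _).mpr hsub2
      obtain ⟨z, hz, hzx⟩ := h2 hx
      have : z = x := Subtype.ext hzx
      exact this ▸ hz
    · have hnorm : (M.subgroupOf N).Normal := hMnormal.comap N.subtype
      apply Subgroup.normalClosure_le_normal
      rintro w (⟨a, b, rfl⟩ | ⟨a, rfl⟩)
      · show ⁅a, b⁆ ∈ M.subgroupOf N
        rw [Subgroup.mem_subgroupOf]
        refine Subgroup.subset_closure ?_
        exact Or.inl ⟨(a : G), a.2, (b : G), b.2, rfl⟩
      · show a ^ p ∈ M.subgroupOf N
        rw [Subgroup.mem_subgroupOf]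
        refine Subgroup.subset_closure ?_
        exact Or.inr ⟨(a : G), a.2, rfl⟩
  have hker : f.ker = modP p ↥N := by
    rw [← hMsub]
    ext x
    rw [MonoidHom.mem_ker, Subgroup.mem_subgroupOf]
    constructor
    · intro h
      have h2 : ((f x : ↥Nb) : G ⧸ M) = 1 := by rw [h]; rfl
      have h3 : κ (x : G) = 1 := h2
      exact (QuotientGroup.eq_one_iff _).mp h3
    · intro h
      have h3 : κ (x : G) = 1 := (QuotientGroup.eq_one_iff _).mpr h
      exact Subtype.ext h3
  have hdp1 : dp p ↥N = dp p ↥Nb :=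
    dp_eq_of_surjective_ker_le p f hfsurj (le_of_eq hker)
  have hcomapNb : Subgroup.comap κ Nb = N := by
    rw [hNb_def, Subgroup.comap_map_eq, QuotientGroup.ker_mk', sup_of_le_left hMN]
  have hNbidx : Nb.index = p := by
    have := Subgroup.index_comap_of_surjective Nb (QuotientGroup.mk'_surjective M)
    rw [hcomapNb, hidx] at this
    exact this.symm
  -- Nb is commutative of exponent p and finitely generated, hence finite
  have hcomm : ∀ u v : ↥Nb, u * v = v * u := by
    rintro ⟨u, a, ha, rfl⟩ ⟨v, b, hb, rfl⟩
    refine Subtype.ext ?_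
    show κ a * κ b = κ b * κ a
    rw [← map_mul, ← map_mul]
    refine (QuotientGroup.eq (s := M)).mpr ?_
    have heq : (a * b)⁻¹ * (b * a) = ⁅a⁻¹, b⁻¹⁆⁻¹ := by
      rw [commutatorElement_def]
      group
    rw [heq]
    exact inv_mem (Subgroup.subset_closure (Or.inl ⟨a⁻¹, inv_mem ha, b⁻¹, inv_mem hb, rfl⟩))
  have hexpNb : ∀ u : ↥Nb, u ^ p = 1 := by
    rintro ⟨u, a, ha, rfl⟩
    refine Subtype.ext ?_
    show (κ a) ^ p = 1
    rw [← map_pow]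
    exact (QuotientGroup.eq_one_iff _).mpr
      (Subgroup.subset_closure (Or.inr ⟨a, ha, rfl⟩))
  have hfgNb : Group.FG ↥Nb := Group.fg_of_surjective hfsurj
  have hfinNb : Finite ↥Nb := by
    letI : CommGroup ↥Nb := { (inferInstance : Group ↥Nb) with mul_comm := hcomm }
    exact finite_of_fg_exponent_p hp0 hfgNb hexpNb
  haveI := hfinNb
  haveI hfinQ : Finite (G ⧸ M) := by
    refine Nat.finite_of_card_ne_zero ?_
    have h1 : Nat.card ↥Nb * Nb.index = Nat.card (G ⧸ M) := Subgroup.card_mul_index Nb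
    rw [← h1, hNbidx]
    have h2 : 0 < Nat.card ↥Nb := Nat.card_pos
    positivity
  have hPQ : IsPGroup p (G ⧸ M) := by
    intro g
    refine ⟨2, ?_⟩
    have hgp : g ^ p ∈ Nb := by
      have := Subgroup.pow_index_mem Nb g
      rwa [hNbidx] at this
    have h1 := hexpNb ⟨g ^ p, hgp⟩
    have h2 : ((⟨g ^ p, hgp⟩ : ↥Nb) ^ p : G ⧸ M) = (g ^ p) ^ p := rfl
    rw [pow_two, pow_mul]
    calc (g ^ p) ^ p = ((⟨g ^ p, hgp⟩ : ↥Nb) ^ p : G ⧸ M) := h2.symm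
      _ = ((1 : ↥Nb) : G ⧸ M) := by
          rw [show ((⟨g ^ p, hgp⟩ : ↥Nb) : G ⧸ M) ^ p
            = (((⟨g ^ p, hgp⟩ : ↥Nb) ^ p : ↥Nb) : G ⧸ M) from rfl, h1]
      _ = 1 := rfl
  haveI hQfg : Group.FG (G ⧸ M) := inferInstance
  have h1 : ngen (G ⧸ M) ≤ dp p (G ⧸ M) := ngen_le_dp_of_pgroup hp hPQ
  have h3 : dp p (G ⧸ M) ≤ dp p G := dp_le_of_surjective p κ (QuotientGroup.mk'_surjective M) hfg
  obtain ⟨S, hScard, hSgen⟩ := ngen_spec (G ⧸ M)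
  have hS1 : 1 ≤ S.card := by
    rcases Nat.eq_zero_or_pos S.card with h | h
    · exfalso
      rw [Finset.card_eq_zero] at h
      subst h
      rw [Finset.coe_empty, Subgroup.closure_empty] at hSgen
      haveI : Subsingleton (G ⧸ M) := by
        constructor
        intro a b
        have ha : a ∈ (⊥ : Subgroup (G ⧸ M)) := hSgen ▸ Subgroup.mem_top a
        have hb : b ∈ (⊥ : Subgroup (G ⧸ M)) := hSgen ▸ Subgroup.mem_top b
        rw [Subgroup.mem_bot] at ha hb
        rw [ha, hb]
      haveI : Subsingleton ((G ⧸ M) ⧸ Nb) := Quotient.instSubsingletonQuotient _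
      haveI : Unique ((G ⧸ M) ⧸ Nb) := Unique.mk' _
      have : Nb.index = 1 := Nat.card_unique
      rw [hNbidx] at this
      exact hp.one_lt.ne' this
    · exact h
  obtain ⟨T, hTsub, hTcard, hTclos⟩ := schreier_index_p hp hNbnormal hNbidx hSgen
  obtain ⟨T', hT'card, hT'gen⟩ := exists_finset_subtype T hTsub hTclos
  have h4 : ngen ↥Nb ≤ 1 + p * (S.card - 1) := le_trans (ngen_le hT'gen) (hT'card ▸ hTcard)
  have h5 : dp p ↥Nb ≤ ngen ↥Nb := by
    rw [dp_eq_ngen]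
    exact ngen_le_of_surjective _ (QuotientGroup.mk'_surjective _) hfgNb
  -- assemble the integer inequality
  have hd : S.card ≤ dp p G := le_trans (hScard ▸ h1) h3
  have hfinal : dp p ↥N ≤ 1 + p * (S.card - 1) := by
    rw [hdp1]
    exact le_trans h5 h4
  have hc1 : (dp p ↥N : ℤ) ≤ 1 + (p : ℤ) * ((S.card : ℤ) - 1) := by
    have := hfinal
    have hcast : ((1 + p * (S.card - 1) : ℕ) : ℤ) = 1 + (p : ℤ) * ((S.card : ℤ) - 1) := by
      push_cast [Nat.cast_sub hS1]
      ring
    calc (dp p ↥N : ℤ) ≤ ((1 + p * (S.card - 1) : ℕ) : ℤ) := by exact_mod_cast this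
      _ = 1 + (p : ℤ) * ((S.card : ℤ) - 1) := hcast
  have hc2 : ((S.card : ℤ) - 1) ≤ (dp p G : ℤ) - 1 := by
    have : (S.card : ℤ) ≤ (dp p G : ℤ) := by exact_mod_cast hd
    omega
  calc (dp p ↥N : ℤ) - 1 ≤ (p : ℤ) * ((S.card : ℤ) - 1) := by omega
    _ ≤ (p : ℤ) * ((dp p G : ℤ) - 1) := by
        refine mul_le_mul_of_nonneg_left hc2 ?_
        positivity

lemma chain_le {G : Type*} [Group G] (c : ℕ → Subgroup G) :
    ∀ n, (∀ i < n, c (i + 1) ≤ c i) → ∀ i, i ≤ n → c n ≤ c i := by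
  intro n
  induction n with
  | zero =>
    intro _ i hi
    rw [Nat.le_zero.mp hi]
  | succ n ihn =>
    intro hstep i hi
    rcases Nat.eq_or_lt_of_le hi with rfl | hlt
    · exact le_rfl
    · exact le_trans (hstep n (by omega)) (ihn (fun i hi => hstep i (by omega)) i (by omega))

lemma subgroupOf_subgroupOf_normal {G : Type*} [Group G] {A B : Subgroup G} (N : Subgroup G)
    (hAB : A ≤ B) (h : (A.subgroupOf B).Normal) :
    ((A.subgroupOf N).subgroupOf (B.subgroupOf N)).Normal := by
  have h' := (Subgroup.normal_subgroupOf_iff hAB).mp h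
  have hle : A.subgroupOf N ≤ B.subgroupOf N := by
    intro x hx
    rw [Subgroup.mem_subgroupOf] at *
    exact hAB hx
  rw [Subgroup.normal_subgroupOf_iff hle]
  intro a b ha hb
  rw [Subgroup.mem_subgroupOf] at *
  have hcon := h' (a : G) (b : G) ha hb
  simpa using hcon

lemma normal_of_subgroupOf_top {G : Type*} [Group G] {A : Subgroup G}
    (h : (A.subgroupOf ⊤).Normal) : A.Normal := by
  have h' := (Subgroup.normal_subgroupOf_iff le_top).mp h
  exact ⟨fun a ha g => h' a g ha trivial⟩

lemma dp_top_case {p : ℕ} {G : Type*} [Group G] (K : Subgroup G) (hK : K = ⊤) :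
    (dp p ↥K : ℤ) - 1 ≤ (K.index : ℤ) * ((dp p G : ℤ) - 1) := by
  subst hK
  have h1 : dp p ↥(⊤ : Subgroup G) = dp p G := dp_congr p Subgroup.topEquiv
  rw [h1, Subgroup.index_top]
  simp

universe u

lemma dp_chain_aux (p : ℕ) (hp : p.Prime) :
    ∀ (m : ℕ) {G : Type u} [Group G], ∀ (hfg : Group.FG G) (K : Subgroup G) (n k : ℕ)
      (c : ℕ → Subgroup G), c 0 = ⊤ → c n = K →
      (∀ i < n, c (i + 1) ≤ c i ∧ ((c (i + 1)).subgroupOf (c i)).Normal) →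
      K.index = p ^ k → n + k ≤ m →
      (dp p ↥K : ℤ) - 1 ≤ (K.index : ℤ) * ((dp p G : ℤ) - 1) := by
  intro m
  induction m with
  | zero =>
    intro G _ hfg K n k c h0 hn hstep hk hm
    have hn0 : n = 0 := by omega
    subst hn0
    exact dp_top_case K (hn ▸ h0)
  | succ m ih =>
    intro G _ hfg K n k c h0 hn hstep hk hm
    haveI := hfg
    cases n with
    | zero => exact dp_top_case K (hn ▸ h0)
    | succ n' =>
      set N₀ := c 1 with hN₀_def
      have hN₀normal : N₀.Normal := by
        have h1 := (hstep 0 (by omega)).2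
        rw [h0] at h1
        exact normal_of_subgroupOf_top h1
      have hKN₀ : K ≤ N₀ := by
        have h1 := chain_le c (n' + 1) (fun i hi => (hstep i hi).1) 1 (by omega)
        rw [hn] at h1
        exact h1
      have hidxdvd : N₀.index ∣ p ^ k := by
        rw [← hk]
        exact Subgroup.index_dvd_of_le hKN₀
      obtain ⟨j, hjk, hjeq⟩ := (Nat.dvd_prime_pow hp).mp hidxdvd
      by_cases hN₀top : N₀ = ⊤
      · refine ih hfg K n' k (fun i => c (i + 1)) hN₀top hn ?_ hk (by omega)
        intro i hi
        exact hstep (i + 1) (by omega)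
      · have hj1 : 1 ≤ j := by
          rcases Nat.eq_zero_or_pos j with hj0 | hj0
          · exfalso
            rw [hj0, pow_zero] at hjeq
            exact hN₀top (Subgroup.index_eq_one.mp hjeq)
          · exact hj0
        obtain ⟨N, hNnormal, hN₀N, hNidx⟩ := exists_normal_index_p hp hN₀normal hj1 hjeq
        have hKN : K ≤ N := le_trans hKN₀ hN₀N
        haveI := hNnormal
        haveI : N.FiniteIndex := ⟨by rw [hNidx]; exact hp.pos.ne'⟩
        haveI hfgN : Group.FG ↥N := inferInstance
        have hrel := Subgroup.relIndex_mul_index hKN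
        rw [hNidx, hk] at hrel
        have hk1 : 1 ≤ k := by
          by_contra hcon
          have hk0 : k = 0 := by omega
          rw [hk0, pow_zero] at hrel
          have hdvd : p ∣ 1 := hrel ▸ Dvd.intro_left (K.relIndex N) rfl
          have := Nat.le_of_dvd one_pos hdvd
          have := hp.one_lt
          omega
        obtain ⟨k', rfl⟩ : ∃ k', k = k' + 1 := ⟨k - 1, by omega⟩
        have hrelval : K.relIndex N = p ^ k' := by
          have h2 : K.relIndex N * p = p ^ k' * p := by rw [hrel, pow_succ]
          exact Nat.eq_of_mul_eq_mul_right hp.pos h2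
        set d : ℕ → Subgroup ↥N := fun i => (c i).subgroupOf N with hd_def
        have hd0 : d 0 = ⊤ := by
          show (c 0).subgroupOf N = ⊤
          rw [h0, Subgroup.top_subgroupOf]
        have hdn : d (n' + 1) = K.subgroupOf N := by
          show (c (n' + 1)).subgroupOf N = K.subgroupOf N
          rw [hn]
        have hdstep : ∀ i < n' + 1, d (i + 1) ≤ d i ∧ ((d (i + 1)).subgroupOf (d i)).Normal := by
          intro i hi
          obtain ⟨hle, hnor⟩ := hstep i hi
          constructor
          · intro x hx
            rw [Subgroup.mem_subgroupOf] at *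
            exact hle hx
          · exact subgroupOf_subgroupOf_normal N hle hnor
        have hidx' : (K.subgroupOf N).index = p ^ k' := by
          show K.relIndex N = p ^ k'
          exact hrelval
        have hIH := ih hfgN (K.subgroupOf N) (n' + 1) k' d hd0 hdn hdstep hidx' (by omega)
        have hstepN := dp_step hp hfg hNnormal hNidx
        have he : dp p ↥(K.subgroupOf N) = dp p ↥K :=
          dp_congr p (Subgroup.subgroupOfEquivOfLe hKN)
        rw [he, hidx'] at hIH
        rw [hk]
        calc (dp p ↥K : ℤ) - 1 ≤ ((p ^ k' : ℕ) : ℤ) * ((dp p ↥N : ℤ) - 1) := hIH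
          _ ≤ ((p ^ k' : ℕ) : ℤ) * ((p : ℤ) * ((dp p G : ℤ) - 1)) := by
              refine mul_le_mul_of_nonneg_left hstepN ?_
              positivity
          _ = ((p ^ (k' + 1) : ℕ) : ℤ) * ((dp p G : ℤ) - 1) := by push_cast; ring

/-- If `H` is finitely generated and `K` is a subnormal subgroup of `H` with index a power
of the prime `p`, then `d_p(K) - 1 ≤ [H:K] (d_p(H) - 1)`. -/
theorem dp_sub_one_le_index_mul_dp_sub_one_of_subnormal (H : Type*) [Group H]
    (hH : Group.FG H) (p : ℕ) (hp : p.Prime) (K : Subgroup H)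
    (hsub : K.Subnormal) (k : ℕ) (hindex : K.index = p ^ k) :
    (dp p K : ℤ) - 1 ≤ (K.index : ℤ) * ((dp p H : ℤ) - 1) := by
  obtain ⟨n, c, h0, hn, hstep⟩ := hsub
  exact dp_chain_aux p hp (n + k) hH K n k c h0 hn hstep hindex le_rfl
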